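/- arXiv:1707.01301 — 7 statements merged into one kernel-verified Lean document; each statement's English description precedes it below -/
import Mathlib

section
/- Uniqueness for the non-hydrostatic pressure boundary value problem: Let ℓ > 0 and let h, H : [0, ℓ] → ℝ be sufficiently smooth with H(x) > 0 on [0, ℓ]. Set r(x) = 4 + h'(x)², K(x) = 4/(H(x)·r(x)) and K₀(x) = 6·[ (2/H(x)³)·(r(x) − 3)/r(x) + (h'/(H²·r))'(x) ]. Assume K₀(x) > 0 for all x ∈ [0, ℓ], h'(0) ≥ 0 and h'(ℓ) ≤ 0. If P₁, P₂ : [0, ℓ] → ℝ are twice continuously differentiable, both satisfy the equation (K·P')'(x) − K₀(x)·P(x) = F(x) for all x ∈ [0, ℓ] (with the same right-hand side F), and both satisfy the boundary conditions K(x)·P'(x) − (6·h'(x)/(H(x)²·r(x)))·P(x) = G₀ at x = 0 and = G₁ at x = ℓ (with the same boundary data G₀, G₁), then P₁(x) = P₂(x) for all x ∈ [0, ℓ]. -/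
open scoped ContDiff
open Set intervalIntegral MeasureTheory

/-- If a nonneg continuous function on `[a,b]` is positive somewhere,
its integral is positive. -/
lemma sgn_aux_pos_integral (a b : ℝ) (hab : a < b) (g : ℝ → ℝ)
    (hg : ContinuousOn g (Set.Icc a b)) (hnn : ∀ x ∈ Set.Icc a b, 0 ≤ g x)
    (x₀ : ℝ) (hx₀ : x₀ ∈ Set.Icc a b) (hpos : 0 < g x₀) :
    0 < ∫ x in a..b, g x := by
  have gint : IntervalIntegrable g volume a b := by
    apply ContinuousOn.intervalIntegrable
    rwa [Set.uIcc_of_le hab.le]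
  -- find a small interval around x₀ where g > g x₀ / 2
  have hev : {y | g y ∈ Set.Ioi (g x₀ / 2)} ∈ nhdsWithin x₀ (Set.Icc a b) :=
    hg x₀ hx₀ (Ioi_mem_nhds (by linarith))
  rcases Metric.mem_nhdsWithin_iff.mp hev with ⟨δ, hδ, hball⟩
  -- choose a nondegenerate subinterval [u,v] of [a,b] inside the ball
  obtain ⟨u, v, huv, hsub⟩ : ∃ u v : ℝ, u < v ∧
      Set.Icc u v ⊆ Set.Icc a b ∩ Metric.ball x₀ δ := by
    rcases lt_or_eq_of_le hx₀.2 with hlt | heq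
    · refine ⟨x₀, min b (x₀ + δ/2), by simp [hlt, hδ], ?_⟩
      intro y hy
      have h1 : y ≤ b := hy.2.trans (min_le_left _ _)
      have h2 : y ≤ x₀ + δ/2 := hy.2.trans (min_le_right _ _)
      refine ⟨⟨hx₀.1.trans hy.1, h1⟩, ?_⟩
      rw [Metric.mem_ball, Real.dist_eq, abs_lt]
      constructor <;> [linarith [hy.1]; linarith]
    · refine ⟨max a (b - δ/2), b, by simp [hab, hδ], ?_⟩
      intro y hy
      have h1 : a ≤ y := (le_max_left _ _).trans hy.1
      have h2 : b - δ/2 ≤ y := (le_max_right _ _).trans hy.1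
      refine ⟨⟨h1, hy.2⟩, ?_⟩
      rw [Metric.mem_ball, Real.dist_eq, abs_lt]
      subst heq; constructor <;> linarith [hy.2]
  have hsubIcc : Set.Icc u v ⊆ Set.Icc a b := fun y hy => (hsub hy).1
  have hg_big : ∀ y ∈ Set.Icc u v, g x₀ / 2 ≤ g y := by
    intro y hy
    have : y ∈ Metric.ball x₀ δ ∩ Set.Icc a b := ⟨(hsub hy).2, (hsub hy).1⟩
    exact le_of_lt (hball this)
  have hau : a ≤ u := (hsubIcc (Set.left_mem_Icc.mpr huv.le)).1
  have hvb : v ≤ b := (hsubIcc (Set.right_mem_Icc.mpr huv.le)).2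
  -- integrability on subintervals
  have i1 : IntervalIntegrable g volume a u := gint.mono_set
    (by rw [Set.uIcc_of_le hau, Set.uIcc_of_le hab.le];
        exact Set.Icc_subset_Icc le_rfl (huv.le.trans hvb))
  have i2 : IntervalIntegrable g volume u v := gint.mono_set
    (by rw [Set.uIcc_of_le huv.le, Set.uIcc_of_le hab.le]; exact hsubIcc)
  have i3 : IntervalIntegrable g volume v b := gint.mono_set
    (by rw [Set.uIcc_of_le hvb, Set.uIcc_of_le hab.le];
        exact Set.Icc_subset_Icc (hau.trans huv.le) le_rfl)
  have split : (∫ x in a..u, g x) + ((∫ x in u..v, g x) + (∫ x in v..b, g x))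
      = ∫ x in a..b, g x := by
    rw [integral_add_adjacent_intervals i2 i3,
      integral_add_adjacent_intervals i1 (i2.trans i3)]
  have n1 : 0 ≤ ∫ x in a..u, g x :=
    integral_nonneg hau (fun y hy => hnn y ⟨hy.1, hy.2.trans (huv.le.trans hvb)⟩)
  have n3 : 0 ≤ ∫ x in v..b, g x :=
    integral_nonneg hvb (fun y hy => hnn y ⟨(hau.trans huv.le).trans hy.1, hy.2⟩)
  have n2 : (v - u) * (g x₀ / 2) ≤ ∫ x in u..v, g x := by
    have := integral_mono_on (f := fun _ => g x₀ / 2) (g := g) (μ := volume)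
      huv.le (intervalIntegrable_const) i2 hg_big
    simpa [smul_eq_mul, mul_div_assoc] using this
  have : 0 < (v - u) * (g x₀ / 2) := by
    apply mul_pos (by linarith) (by linarith)
  linarith [split, n1, n2, n3, this]

/-- Uniqueness for the non-hydrostatic pressure boundary value problem
`(K P')' - K₀ P = F` with Robin boundary conditions, under the sign
conditions `K₀ > 0` on `[0, ℓ]`, `h'(0) ≥ 0`, `h'(ℓ) ≤ 0`. -/
theorem sgn_pressure_bvp_uniqueness
    (ℓ : ℝ) (hℓ : 0 < ℓ)
    (h H : ℝ → ℝ)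
    (hsmooth : ContDiff ℝ (⊤ : ℕ∞) h) (Hsmooth : ContDiff ℝ (⊤ : ℕ∞) H)
    (Hpos : ∀ x ∈ Set.Icc (0 : ℝ) ℓ, 0 < H x)
    (r K K₀ : ℝ → ℝ)
    (hr : ∀ x, r x = 4 + (deriv h x) ^ 2)
    (hK : ∀ x, K x = 4 / (H x * r x))
    (hK₀ : ∀ x, K₀ x = 6 * ((2 / (H x) ^ 3) * ((r x - 3) / r x)
        + deriv (fun y => deriv h y / ((H y) ^ 2 * r y)) x))
    (K₀pos : ∀ x ∈ Set.Icc (0 : ℝ) ℓ, 0 < K₀ x)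
    (hb0 : 0 ≤ deriv h 0) (hbℓ : deriv h ℓ ≤ 0)
    (F : ℝ → ℝ) (G₀ G₁ : ℝ)
    (P₁ P₂ : ℝ → ℝ)
    (hP₁ : ContDiff ℝ 2 P₁) (hP₂ : ContDiff ℝ 2 P₂)
    (heq₁ : ∀ x ∈ Set.Icc (0 : ℝ) ℓ,
      deriv (fun y => K y * deriv P₁ y) x - K₀ x * P₁ x = F x)
    (heq₂ : ∀ x ∈ Set.Icc (0 : ℝ) ℓ,
      deriv (fun y => K y * deriv P₂ y) x - K₀ x * P₂ x = F x)
    (hbc₁0 : K 0 * deriv P₁ 0 - (6 * deriv h 0 / ((H 0) ^ 2 * r 0)) * P₁ 0 = G₀)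
    (hbc₁ℓ : K ℓ * deriv P₁ ℓ - (6 * deriv h ℓ / ((H ℓ) ^ 2 * r ℓ)) * P₁ ℓ = G₁)
    (hbc₂0 : K 0 * deriv P₂ 0 - (6 * deriv h 0 / ((H 0) ^ 2 * r 0)) * P₂ 0 = G₀)
    (hbc₂ℓ : K ℓ * deriv P₂ ℓ - (6 * deriv h ℓ / ((H ℓ) ^ 2 * r ℓ)) * P₂ ℓ = G₁) :
    ∀ x ∈ Set.Icc (0 : ℝ) ℓ, P₁ x = P₂ x := by
  -- basic positivity facts
  have rpos : ∀ x, 0 < r x := fun x => by rw [hr]; positivity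
  -- the open set where H ≠ 0
  set U : Set ℝ := {y | H y ≠ 0} with hU
  have Uopen : IsOpen U := isOpen_ne_fun Hsmooth.continuous continuous_const
  have IccU : Set.Icc (0:ℝ) ℓ ⊆ U := fun y hy => (Hpos y hy).ne'
  -- smoothness of ingredients
  have h'C : ContDiff ℝ (∞ : WithTop ℕ∞) (deriv h) :=
    (contDiff_infty_iff_deriv.mp (hsmooth.of_le (by simp))).2
  have HC : ContDiff ℝ (∞ : WithTop ℕ∞) H := Hsmooth.of_le (by simp)
  have rC : ContDiff ℝ (∞ : WithTop ℕ∞) r := by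
    have h1 : ContDiff ℝ (∞ : WithTop ℕ∞) fun y => 4 + (deriv h y) ^ 2 :=
      contDiff_const.add (h'C.pow 2)
    have hrfun : r = fun y => 4 + (deriv h y) ^ 2 := funext hr
    rwa [hrfun]
  have denom_ne : ∀ y ∈ U, H y * r y ≠ 0 := fun y hy =>
    mul_ne_zero hy (rpos y).ne'
  have KC : ContDiffOn ℝ (∞ : WithTop ℕ∞) K U := by
    have hKfun : K = fun y => 4 / (H y * r y) := funext hK
    rw [hKfun]
    exact ContDiffOn.div contDiffOn_const ((HC.mul rC).contDiffOn) denom_ne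
  have Kdiff : ∀ y ∈ U, DifferentiableAt ℝ K y := fun y hy =>
    (KC.contDiffAt (Uopen.mem_nhds hy)).differentiableAt (by norm_num)
  -- Q and its derivatives
  set Q : ℝ → ℝ := fun y => P₁ y - P₂ y with hQdef
  have QC : ContDiff ℝ 2 Q := hP₁.sub hP₂
  have Qdiff : Differentiable ℝ Q := QC.differentiable (by norm_num)
  have Q'C : ContDiff ℝ 1 (deriv Q) := by
    have h2 : ContDiff ℝ ((1:WithTop ℕ∞) + 1) Q := by norm_num at QC ⊢; exact QC
    exact (contDiff_succ_iff_deriv.mp h2).2.2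
  have Q'diff : Differentiable ℝ (deriv Q) := Q'C.differentiable (by norm_num)
  have hderivQ : ∀ y, deriv Q y = deriv P₁ y - deriv P₂ y := fun y =>
    deriv_fun_sub (hP₁.differentiable (by norm_num) y) (hP₂.differentiable (by norm_num) y)
  have P₁'diff : Differentiable ℝ (deriv P₁) := by
    have h2 : ContDiff ℝ ((1:WithTop ℕ∞) + 1) P₁ := by norm_num at hP₁ ⊢; exact hP₁
    exact (contDiff_succ_iff_deriv.mp h2).2.2.differentiable (by norm_num)
  have P₂'diff : Differentiable ℝ (deriv P₂) := by
    have h2 : ContDiff ℝ ((1:WithTop ℕ∞) + 1) P₂ := by norm_num at hP₂ ⊢; exact hP₂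
    exact (contDiff_succ_iff_deriv.mp h2).2.2.differentiable (by norm_num)
  -- K Q' is C¹ on U
  have KQ'C : ContDiffOn ℝ 1 (fun y => K y * deriv Q y) U :=
    (KC.of_le (by norm_num)).mul (Q'C.contDiffOn)
  have KQ'diff : ∀ y ∈ U, DifferentiableAt ℝ (fun z => K z * deriv Q z) y := fun y hy =>
    (Kdiff y hy).mul (Q'diff y)
  -- the equation satisfied by Q
  have heqQ : ∀ y ∈ Set.Icc (0:ℝ) ℓ,
      deriv (fun z => K z * deriv Q z) y = K₀ y * Q y := by
    intro y hy
    have hyU : y ∈ U := IccU hy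
    have hsplit : (fun z => K z * deriv Q z)
        = fun z => K z * deriv P₁ z - K z * deriv P₂ z := by
      funext z; rw [hderivQ z]; ring
    have d₁ : DifferentiableAt ℝ (fun z => K z * deriv P₁ z) y :=
      (Kdiff y hyU).mul (P₁'diff y)
    have d₂ : DifferentiableAt ℝ (fun z => K z * deriv P₂ z) y :=
      (Kdiff y hyU).mul (P₂'diff y)
    rw [hsplit, deriv_fun_sub d₁ d₂]
    have e₁ := heq₁ y hy
    have e₂ := heq₂ y hy
    simp only [hQdef]
    nlinarith [e₁, e₂]
  -- the energy integrand
  set g : ℝ → ℝ := fun y =>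
    deriv (fun z => K z * deriv Q z) y * Q y + (K y * deriv Q y) * deriv Q y with hg
  have hE : ∀ y ∈ Set.uIcc (0:ℝ) ℓ,
      HasDerivAt (fun z => K z * deriv Q z * Q z) (g y) y := by
    intro y hy
    rw [Set.uIcc_of_le hℓ.le] at hy
    have hyU : y ∈ U := IccU hy
    have h1 : HasDerivAt (fun z => K z * deriv Q z)
        (deriv (fun z => K z * deriv Q z) y) y := (KQ'diff y hyU).hasDerivAt
    exact h1.mul (Qdiff y).hasDerivAt
  -- continuity and integrability of g on [0, ℓ]
  have gcont : ContinuousOn g (Set.Icc (0:ℝ) ℓ) := by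
    have c1 : ContinuousOn (deriv (fun z => K z * deriv Q z)) U :=
      KQ'C.continuousOn_deriv_of_isOpen Uopen le_rfl
    have c2 : ContinuousOn K U := KC.continuousOn
    exact ((c1.mono IccU).mul (QC.continuous.continuousOn)).add
      (((c2.mono IccU).mul (Q'C.continuous.continuousOn)).mul
        (Q'C.continuous.continuousOn))
  have gint : IntervalIntegrable g volume 0 ℓ := by
    apply ContinuousOn.intervalIntegrable
    rwa [Set.uIcc_of_le hℓ.le]
  -- integration by parts identity
  have hIBP : ∫ y in (0:ℝ)..ℓ, g y
      = K ℓ * deriv Q ℓ * Q ℓ - K 0 * deriv Q 0 * Q 0 :=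
    integral_eq_sub_of_hasDerivAt hE gint
  -- boundary terms
  have hbQ0 : K 0 * deriv Q 0 = (6 * deriv h 0 / ((H 0) ^ 2 * r 0)) * Q 0 := by
    rw [hderivQ 0]; simp only [hQdef]; nlinarith [hbc₁0, hbc₂0]
  have hbQℓ : K ℓ * deriv Q ℓ = (6 * deriv h ℓ / ((H ℓ) ^ 2 * r ℓ)) * Q ℓ := by
    rw [hderivQ ℓ]; simp only [hQdef]; nlinarith [hbc₁ℓ, hbc₂ℓ]
  have hIcc0 : (0:ℝ) ∈ Set.Icc (0:ℝ) ℓ := Set.left_mem_Icc.mpr hℓ.le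
  have hIccℓ : ℓ ∈ Set.Icc (0:ℝ) ℓ := Set.right_mem_Icc.mpr hℓ.le
  have bnd : (∫ y in (0:ℝ)..ℓ, g y) ≤ 0 := by
    rw [hIBP, hbQ0, hbQℓ]
    have hH0 := Hpos 0 hIcc0
    have hHℓ := Hpos ℓ hIccℓ
    have hr0 := rpos 0
    have hrℓ := rpos ℓ
    have c0 : 0 ≤ 6 * deriv h 0 / ((H 0) ^ 2 * r 0) :=
      div_nonneg (by linarith) (by positivity)
    have c1 : 6 * deriv h ℓ / ((H ℓ) ^ 2 * r ℓ) ≤ 0 :=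
      div_nonpos_of_nonpos_of_nonneg (by linarith) (by positivity)
    nlinarith [sq_nonneg (Q ℓ), sq_nonneg (Q 0), mul_nonneg c0 (sq_nonneg (Q 0)),
      mul_nonpos_of_nonpos_of_nonneg c1 (sq_nonneg (Q ℓ))]
  -- positivity of K on Icc
  have Kpos : ∀ y ∈ Set.Icc (0:ℝ) ℓ, 0 < K y := by
    intro y hy
    have := Hpos y hy
    have := rpos y
    rw [hK]; positivity
  -- nonnegativity of g on Icc
  have gval : ∀ y ∈ Set.Icc (0:ℝ) ℓ,
      g y = K₀ y * Q y * Q y + K y * deriv Q y * deriv Q y := by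
    intro y hy
    simp only [hg]
    rw [heqQ y hy]; try ring
  have gnn : ∀ y ∈ Set.Icc (0:ℝ) ℓ, 0 ≤ g y := by
    intro y hy
    rw [gval y hy]
    have h1 : 0 ≤ K₀ y * Q y * Q y := by
      rw [mul_assoc]; exact mul_nonneg (K₀pos y hy).le (mul_self_nonneg _)
    have h2 : 0 ≤ K y * deriv Q y * deriv Q y := by
      rw [mul_assoc]; exact mul_nonneg (Kpos y hy).le (mul_self_nonneg _)
    linarith
  -- conclude Q = 0 on Icc
  intro x hx
  by_contra hne
  have hQx : Q x ≠ 0 := sub_ne_zero.mpr hne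
  have hgx : 0 < g x := by
    rw [gval x hx]
    have h1 : 0 < K₀ x * Q x * Q x := by
      rw [mul_assoc]
      exact mul_pos (K₀pos x hx) (mul_self_pos.mpr hQx)
    have h2 : 0 ≤ K x * deriv Q x * deriv Q x := by
      rw [mul_assoc]; exact mul_nonneg (Kpos x hx).le (mul_self_nonneg _)
    linarith
  have := sgn_aux_pos_integral 0 ℓ hℓ g gcont gnn x hx hgx
  linarith
end

section
/- Stability criterion of the predictor–corrector scheme: Let c > 0, ℵ > 0, θ ≥ 0, ς ∈ ℝ and ξ ∈ (0, π]. Set ζ = sin²(ξ/2), ħ = 1 + (4ς²/3)ζ, 𝔡 = 4c²ℵ²ζ, β = cℵ·sin ξ, and let ρ± = 1 − 𝔡(1+θ)/(2ħ) ± i·β/√ħ. Then |ρ⁺| ≤ 1 (equivalently |ρ⁻| ≤ 1) if and only if c²ℵ²(1+θ)²·ζ ≤ (1 + (4ς²/3)·ζ)·(ζ + θ). -/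
/-!
Writing `ρ± = x ± i y`, `|ρ±| ≤ 1` is `x² + y² ≤ 1`. Since `sin² ξ = 4ζ(1 - ζ)`, with
`a = c²ℵ²` one has `x = 1 - 2aζ(1+θ)/ħ` and `y² = 4aζ(1-ζ)/ħ`, and expanding gives
`1 - x² - y² = (4aζ/ħ²)·(ħ(ζ+θ) - a(1+θ)²ζ)`, whose prefactor is positive for `ξ ∈ (0, π]`.
-/

open Complex

theorem Complex.norm_ofReal_add_I_mul_le_one_iff (x y : ℝ) :
    ‖(x : ℂ) + I * y‖ ≤ 1 ↔ x ^ 2 + y ^ 2 ≤ 1 := by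
  rw [mul_comm, norm_add_mul_I, Real.sqrt_le_one]

theorem Complex.norm_ofReal_sub_I_mul_le_one_iff (x y : ℝ) :
    ‖(x : ℂ) - I * y‖ ≤ 1 ↔ x ^ 2 + y ^ 2 ≤ 1 := by
  rw [sub_eq_add_neg, ← mul_neg, ← ofReal_neg, norm_ofReal_add_I_mul_le_one_iff, neg_sq]

theorem Real.sin_sq_eq_four_mul_sin_sq_half (ξ : ℝ) :
    sin ξ ^ 2 = 4 * sin (ξ / 2) ^ 2 * (1 - sin (ξ / 2) ^ 2) := by
  conv_lhs => rw [← mul_div_cancel₀ ξ two_ne_zero, sin_two_mul]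
  rw [← cos_sq']
  ring

theorem one_sub_transmission_sq_add_sq {a ζ θ h : ℝ} (hh : h ≠ 0) :
    1 - ((1 - 4 * a * ζ * (1 + θ) / (2 * h)) ^ 2 + 4 * a * ζ * (1 - ζ) / h)
      = 4 * a * ζ / h ^ 2 * (h * (ζ + θ) - a * (1 + θ) ^ 2 * ζ) := by
  field_simp
  ring

theorem transmission_sq_add_sq_le_one_iff {a ζ θ h : ℝ} (ha : 0 < a) (hζ : 0 < ζ) (hh : 0 < h) :
    (1 - 4 * a * ζ * (1 + θ) / (2 * h)) ^ 2 + 4 * a * ζ * (1 - ζ) / h ≤ 1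
      ↔ a * (1 + θ) ^ 2 * ζ ≤ h * (ζ + θ) := by
  rw [← sub_nonneg, one_sub_transmission_sq_add_sq hh.ne',
    mul_nonneg_iff_of_pos_left (by positivity), sub_nonneg]

theorem vonNeumann_stability_criterion_general
    (c al θ ς ξ : ℝ) (hc : 0 < c) (hal : 0 < al)
    (hξ : ξ ∈ Set.Ioc (0 : ℝ) Real.pi)
    (ζ hbar dd β : ℝ)
    (hζ : ζ = Real.sin (ξ / 2) ^ 2)
    (hhbar : hbar = 1 + 4 * ς ^ 2 / 3 * ζ)
    (hdd : dd = 4 * c ^ 2 * al ^ 2 * ζ)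
    (hβ : β = c * al * Real.sin ξ)
    (ρp ρm : ℂ)
    (hρp : ρp = ((1 - dd * (1 + θ) / (2 * hbar) : ℝ) : ℂ)
        + Complex.I * ((β / Real.sqrt hbar : ℝ) : ℂ))
    (hρm : ρm = ((1 - dd * (1 + θ) / (2 * hbar) : ℝ) : ℂ)
        - Complex.I * ((β / Real.sqrt hbar : ℝ) : ℂ)) :
    (‖ρp‖ ≤ 1 ↔
      c ^ 2 * al ^ 2 * (1 + θ) ^ 2 * ζ ≤ (1 + 4 * ς ^ 2 / 3 * ζ) * (ζ + θ)) ∧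
    (‖ρm‖ ≤ 1 ↔
      c ^ 2 * al ^ 2 * (1 + θ) ^ 2 * ζ ≤ (1 + 4 * ς ^ 2 / 3 * ζ) * (ζ + θ)) := by
  have hζ_pos : 0 < ζ := hζ ▸ pow_pos (Real.sin_pos_of_pos_of_lt_pi
    (half_pos hξ.1) (by linarith [hξ.2, Real.pi_pos])) 2
  have hh_pos : 0 < hbar := hhbar ▸ by positivity
  have hdd' : dd = 4 * (c ^ 2 * al ^ 2) * ζ := by rw [hdd]; ring
  have hy : (β / √hbar) ^ 2 = 4 * (c ^ 2 * al ^ 2) * ζ * (1 - ζ) / hbar := by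
    rw [div_pow, Real.sq_sqrt hh_pos.le, hβ, mul_pow, Real.sin_sq_eq_four_mul_sin_sq_half, ← hζ]
    ring
  have key := transmission_sq_add_sq_le_one_iff (a := c ^ 2 * al ^ 2) (θ := θ)
    (by positivity) hζ_pos hh_pos
  rw [← hy, ← hdd'] at key
  rw [hρp, hρm, ← hhbar]
  exact ⟨(norm_ofReal_add_I_mul_le_one_iff _ _).trans key,
    (norm_ofReal_sub_I_mul_le_one_iff _ _).trans key⟩

/-- Stability criterion of the predictor–corrector scheme: the transmission
factors `ρ± = 1 − 𝔡(1+θ)/(2ħ) ± iβ/√ħ` satisfy `|ρ±| ≤ 1` iff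
`c²ℵ²(1+θ)²ζ ≤ (1 + (4ς²/3)ζ)(ζ + θ)`. -/
theorem vonNeumann_stability_criterion
    (c al θ ς ξ : ℝ) (hc : 0 < c) (hal : 0 < al) (hθ : 0 ≤ θ)
    (hξ : ξ ∈ Set.Ioc (0 : ℝ) Real.pi)
    (ζ hbar dd β : ℝ)
    (hζ : ζ = Real.sin (ξ / 2) ^ 2)
    (hhbar : hbar = 1 + 4 * ς ^ 2 / 3 * ζ)
    (hdd : dd = 4 * c ^ 2 * al ^ 2 * ζ)
    (hβ : β = c * al * Real.sin ξ)
    (ρp ρm : ℂ)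
    (hρp : ρp = ((1 - dd * (1 + θ) / (2 * hbar) : ℝ) : ℂ)
        + Complex.I * ((β / Real.sqrt hbar : ℝ) : ℂ))
    (hρm : ρm = ((1 - dd * (1 + θ) / (2 * hbar) : ℝ) : ℂ)
        - Complex.I * ((β / Real.sqrt hbar : ℝ) : ℂ)) :
    (‖ρp‖ ≤ 1 ↔
      c ^ 2 * al ^ 2 * (1 + θ) ^ 2 * ζ ≤ (1 + 4 * ς ^ 2 / 3 * ζ) * (ζ + θ)) ∧
    (‖ρm‖ ≤ 1 ↔
      c ^ 2 * al ^ 2 * (1 + θ) ^ 2 * ζ ≤ (1 + 4 * ς ^ 2 / 3 * ζ) * (ζ + θ)) :=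
  vonNeumann_stability_criterion_general c al θ ς ξ hc hal hξ ζ hbar dd β hζ hhbar hdd hβ ρp ρm hρp
    hρm
end

section
/- Stability condition for θ = 0: Let c > 0, ℵ > 0 and ς ∈ ℝ. Then the inequality c²ℵ²·ζ − (1 + (4ς²/3)·ζ)·ζ ≤ 0 holds for all ζ ∈ [0, 1] if and only if c·ℵ ≤ 1. In particular, for θ = 0 the stability condition is c·ℵ ≤ 1 and does not depend on ς. -/
/-- Stability condition of the predictor–corrector scheme for `θ = 0`:
the inequality `c²ℵ²ζ − (1 + (4ς²/3)ζ)ζ ≤ 0` holds for all `ζ ∈ [0,1]`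
iff `cℵ ≤ 1`; in particular it does not depend on `ς`. -/
theorem stability_condition_theta_zero
    (c al ς : ℝ) (hc : 0 < c) (hal : 0 < al) :
    (∀ ζ ∈ Set.Icc (0 : ℝ) 1,
        c ^ 2 * al ^ 2 * ζ - (1 + 4 * ς ^ 2 / 3 * ζ) * ζ ≤ 0)
      ↔ c * al ≤ 1 := by
  constructor
  · intro h
    by_contra hlt
    push_neg at hlt
    set ε := c ^ 2 * al ^ 2 - 1 with hε
    have hεpos : 0 < ε := by nlinarith
    have hden : 0 < 8 * ς ^ 2 + 3 * ε := by positivity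
    set ζ := 3 * ε / (8 * ς ^ 2 + 3 * ε) with hζ
    have hζpos : 0 < ζ := by positivity
    have hζle : ζ ≤ 1 := by
      rw [hζ, div_le_one hden]; nlinarith
    have := h ζ ⟨le_of_lt hζpos, hζle⟩
    have hmul : ζ * (8 * ς ^ 2 + 3 * ε) = 3 * ε := by
      rw [hζ]; field_simp
    have hkey : 4 * ς ^ 2 / 3 * ζ < ε := by
      nlinarith [mul_pos hεpos hζpos]
    nlinarith [mul_pos hζpos (sub_pos.mpr hkey)]
  · intro h ζ hζ
    obtain ⟨h0, h1⟩ := hζ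
    have : c ^ 2 * al ^ 2 ≤ 1 := by nlinarith [mul_pos hc hal]
    nlinarith [sq_nonneg ς, mul_nonneg (sq_nonneg ς) h0, mul_nonneg (mul_nonneg (sq_nonneg ς) h0) h0]
end

section
/- Long-wave expansion of the discrete phase shift: Let c > 0, ℵ > 0, θ ∈ [0,1], ς ∈ ℝ. For ξ ∈ (0, π) set ζ(ξ) = sin²(ξ/2), ħ(ξ) = 1 + (4ς²/3)ζ(ξ), 𝔡(ξ) = 4c²ℵ²ζ(ξ), β(ξ) = cℵ·sin ξ, A(ξ) = 1 − 𝔡(ξ)(1+θ)/(2ħ(ξ)), |ρ(ξ)| = √(A(ξ)² + β(ξ)²/ħ(ξ)), and define the discrete phase shift φ̂(ξ) = arccos(A(ξ)/|ρ(ξ)|). Then, as ξ → 0⁺, φ̂(ξ) − cℵ·ξ − (cℵ/6)·((cℵ)²(3θ + 1) − 1 − ς²)·ξ³ = O(ξ⁴). -/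
/-!
For `0 < ξ < π` the imaginary part `cℵ sin ξ / √ħ` of `ρ` is positive, and near `ξ = 0` so
is its real part `(ħ - 𝔡(1+θ)/2) / ħ`; hence `φ̂ = arctan (Im ρ / Re ρ)`, with
`Im ρ / Re ρ = cℵ sin ξ √ħ / (ħ - 𝔡(1+θ)/2)`. Inserting the expansions of `sin ξ`,
`ζ = sin² (ξ/2)` and `√ħ`, the cubic terms of the numerator of
`Im ρ / Re ρ - cℵ (ξ + (cℵ²(1+θ)/2 - ς²/6 - 1/6) ξ³)` cancel, and composing with
`arctan t = t - t³/3 + O(t⁵)` gives the expansion of `φ̂`.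
-/

open Filter Asymptotics Topology Real

namespace Real

theorem abs_arctan_sub_arctan_le (x y : ℝ) : |arctan x - arctan y| ≤ |x - y| := by
  simpa only [norm_eq_abs, one_mul] using
    convex_univ.norm_image_sub_le_of_norm_hasDerivWithin_le (C := 1)
      (fun t _ => (hasDerivAt_arctan t).hasDerivWithinAt)
      (fun t _ => by
        rw [norm_eq_abs, abs_of_pos (by positivity), div_le_one (by positivity)]
        nlinarith [sq_nonneg t])
      (Set.mem_univ y) (Set.mem_univ x)

theorem abs_arctan_sub_cubic_le (x : ℝ) : |arctan x - (x - x ^ 3 / 3)| ≤ |x| ^ 5 := by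
  have hderiv (t : ℝ) :
      HasDerivAt (fun t => arctan t - (t - t ^ 3 / 3)) (t ^ 4 / (1 + t ^ 2)) t := by
    refine ((hasDerivAt_arctan t).sub ((hasDerivAt_id' t).sub
      ((hasDerivAt_pow 3 t).div_const 3))).congr_deriv ?_
    field_simp
    ring
  have hbound (t : ℝ) (ht : t ∈ Set.uIcc 0 x) : ‖t ^ 4 / (1 + t ^ 2)‖ ≤ |x| ^ 4 := by
    have h : |t| ≤ |x| := by simpa using Set.abs_sub_left_of_mem_uIcc ht
    rw [norm_eq_abs, abs_of_nonneg (by positivity), div_le_iff₀ (by positivity)]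
    have : |t| ^ 4 ≤ |x| ^ 4 := pow_le_pow_left₀ (abs_nonneg t) h 4
    rw [pow_abs, abs_of_nonneg (by positivity)] at this
    nlinarith [sq_nonneg t, pow_nonneg (abs_nonneg x) 4]
  simpa [norm_eq_abs, ← pow_succ] using
    (convex_uIcc 0 x).norm_image_sub_le_of_norm_hasDerivWithin_le
      (fun t _ => (hderiv t).hasDerivWithinAt) hbound Set.left_mem_uIcc Set.right_mem_uIcc

theorem abs_sqrt_one_add_sub_le {w : ℝ} (hw : -1 ≤ w) :
    |√(1 + w) - (1 + w / 2)| ≤ w ^ 2 / 2 := by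
  have hr := sqrt_nonneg (1 + w)
  have hr2 : √(1 + w) ^ 2 = 1 + w := sq_sqrt (by linarith)
  have hle : √(1 + w) ≤ 1 + w / 2 := by nlinarith [sq_nonneg (√(1 + w) - 1)]
  rw [abs_sub_comm, abs_of_nonneg (by linarith)]
  nlinarith [sq_nonneg w]

theorem arccos_div_sqrt_eq_arctan {A B H : ℝ} (hA : 0 < A) (hB : 0 < B) (hH : 0 < H) :
    arccos (A / √(A ^ 2 + B ^ 2 / H)) = arctan (B / (A * √H)) := by
  have hR : 0 < A ^ 2 + B ^ 2 / H := by positivity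
  rw [arccos_eq_arctan (by positivity)]
  congr 1
  rw [div_pow, sq_sqrt hR.le, one_sub_div hR.ne', add_sub_cancel_left,
    sqrt_div (by positivity), sqrt_div (by positivity), sqrt_sq hB.le]
  field_simp

end Real

theorem arccos_re_div_abs_eq_arctan {c al θ b z s : ℝ} (hs : 0 < c * al * s)
    (hH : 0 < 1 + b * z) (hD : 0 < 1 + (b - 2 * (c * al) ^ 2 * (1 + θ)) * z) :
    arccos ((1 - 4 * c ^ 2 * al ^ 2 * z * (1 + θ) / (2 * (1 + b * z)))
        / √((1 - 4 * c ^ 2 * al ^ 2 * z * (1 + θ) / (2 * (1 + b * z))) ^ 2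
          + (c * al * s) ^ 2 / (1 + b * z)))
      = arctan (c * al * s * √(1 + b * z) / (1 + (b - 2 * (c * al) ^ 2 * (1 + θ)) * z)) := by
  have hA : 1 - 4 * c ^ 2 * al ^ 2 * z * (1 + θ) / (2 * (1 + b * z))
      = (1 + (b - 2 * (c * al) ^ 2 * (1 + θ)) * z) / (1 + b * z) := by
    rw [eq_div_iff hH.ne', sub_mul, div_mul_eq_mul_div, mul_div_mul_right _ _ hH.ne']
    ring
  rw [hA, arccos_div_sqrt_eq_arctan (by positivity) hs hH, div_mul_eq_mul_div,
    div_div_eq_mul_div]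
  congr 1
  rw [div_eq_div_iff (by positivity) hD.ne']
  linear_combination c * al * s * (1 + (b - 2 * (c * al) ^ 2 * (1 + θ)) * z) * (sq_sqrt hH.le).symm

theorem Filter.Tendsto.isBigO_mul {α : Type*} {l : Filter α} {u f g : α → ℝ} {c : ℝ}
    (hu : Tendsto u l (𝓝 c)) (hf : f =O[l] g) : (fun a => u a * f a) =O[l] g := by
  simpa using (hu.isBigO_one ℝ).mul hf

theorem isBigO_sin_sub_cubic :
    (fun x => sin x - (x - x ^ 3 / 6)) =O[𝓝 0] fun x => x ^ 4 := by
  refine IsBigO.of_bound 1 ?_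
  filter_upwards [eventually_abs_sub_lt 0 one_pos] with x hx
  rw [sub_zero] at hx
  rw [norm_eq_abs, norm_eq_abs, one_mul, abs_pow]
  have := pow_le_pow_of_le_one (abs_nonneg x) hx.le (show 4 ≤ 5 by norm_num)
  linarith [sin_bound hx.le, pow_nonneg (abs_nonneg x) 5]

theorem isBigO_sin_half_sq_sub :
    (fun x => sin (x / 2) ^ 2 - x ^ 2 / 4) =O[𝓝 0] fun x => x ^ 4 := by
  refine IsBigO.of_bound 1 ?_
  filter_upwards [eventually_abs_sub_lt 0 one_pos] with x hx
  rw [sub_zero] at hx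
  have h := cos_bound hx.le
  rw [norm_eq_abs, norm_eq_abs, one_mul, abs_pow, sin_sq_eq_half_sub,
    mul_div_cancel₀ x two_ne_zero]
  rw [abs_le] at h ⊢
  constructor <;> nlinarith [pow_nonneg (abs_nonneg x) 4]

theorem isBigO_sqrt_one_add_sub {α : Type*} {l : Filter α} {w : α → ℝ}
    (hw : Tendsto w l (𝓝 0)) :
    (fun a => √(1 + w a) - (1 + w a / 2)) =O[l] fun a => w a ^ 2 := by
  refine IsBigO.of_bound (1 / 2) ?_
  filter_upwards [hw.eventually (eventually_ge_nhds (show (-1 : ℝ) < 0 by norm_num))] with a ha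
  rw [norm_eq_abs, norm_eq_abs, abs_sq, one_div_mul_eq_div]
  exact abs_sqrt_one_add_sub_le ha

theorem isBigO_arctan_comp_sub {F : ℝ → ℝ} {a b : ℝ}
    (hF : (fun x => F x - (a * x + b * x ^ 3)) =O[𝓝 0] fun x => x ^ 4) :
    (fun x => arctan (F x) - (a * x + (b - a ^ 3 / 3) * x ^ 3)) =O[𝓝 0] fun x => x ^ 4 := by
  set y : ℝ → ℝ := fun x => a * x + b * x ^ 3
  have hlip : (fun x => arctan (F x) - arctan (y x)) =O[𝓝 0] fun x => x ^ 4 :=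
    (IsBigO.of_bound 1 (Eventually.of_forall fun x => by
      simpa only [norm_eq_abs, one_mul] using abs_arctan_sub_arctan_le (F x) (y x))).trans hF
  have hcubic : (fun x => arctan (y x) - (y x - y x ^ 3 / 3)) =O[𝓝 0] fun x => x ^ 4 := by
    have h5 : (fun x => (x * (a + b * x ^ 2) ^ 5) * x ^ 4) =O[𝓝 0] fun x => x ^ 4 :=
      ((by fun_prop : Continuous fun x : ℝ => x * (a + b * x ^ 2) ^ 5).tendsto 0).isBigO_mul
        (isBigO_refl _ _)
    refine (IsBigO.of_bound 1 (Eventually.of_forall fun x => ?_)).trans h5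
    rw [norm_eq_abs, norm_eq_abs, one_mul, show x * (a + b * x ^ 2) ^ 5 * x ^ 4 = y x ^ 5 by ring,
      abs_pow]
    exact abs_arctan_sub_cubic_le (y x)
  have htail : (fun x => -(x * (3 * a ^ 2 * b + 3 * a * b ^ 2 * x ^ 2 + b ^ 3 * x ^ 4) / 3) * x ^ 4)
      =O[𝓝 0] fun x => x ^ 4 :=
    ((by fun_prop : Continuous fun x : ℝ =>
      -(x * (3 * a ^ 2 * b + 3 * a * b ^ 2 * x ^ 2 + b ^ 3 * x ^ 4) / 3)).tendsto 0).isBigO_mul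
        (isBigO_refl _ _)
  refine ((hlip.add hcubic).add htail).congr_left fun x => ?_
  simp only [y]
  ring

theorem isBigO_tangent_sub (κ a b : ℝ) :
    (fun x => κ * sin x * √(1 + b * sin (x / 2) ^ 2) / (1 + (b - a) * sin (x / 2) ^ 2)
      - (κ * x + κ * (a / 4 - b / 8 - 1 / 6) * x ^ 3)) =O[𝓝 0] fun x => x ^ 4 := by
  set z : ℝ → ℝ := fun x => sin (x / 2) ^ 2
  set k := a / 4 - b / 8 - 1 / 6
  have hz_cont : Continuous z := by fun_prop
  have hsqrt : (fun x => √(1 + b * z x) - (1 + b * z x / 2)) =O[𝓝 0] fun x => x ^ 4 := by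
    refine (isBigO_sqrt_one_add_sub ?_).trans
      (IsBigO.of_bound (b ^ 2) (Eventually.of_forall fun x => ?_))
    · simpa [z] using (hz_cont.tendsto 0).const_mul b
    · have hzx : z x ≤ x ^ 2 := sin_sq_le_sq.trans (by nlinarith [sq_nonneg x])
      rw [norm_eq_abs, norm_eq_abs, abs_sq, abs_of_nonneg (by positivity), mul_pow]
      gcongr
      simpa [← pow_mul] using pow_le_pow_left₀ (sq_nonneg _) hzx 2
  -- Splitting `sin x`, `√(1 + b z)` and `z` into their expansions plus remainders, the
  -- numerator is a combination of the three remainders plus an `x⁵` term: the choice of `k`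
  -- makes the cubic terms cancel.
  have hnum : (fun x => κ * sin x * √(1 + b * z x)
      - (κ * x + κ * k * x ^ 3) * (1 + (b - a) * z x)) =O[𝓝 0] fun x => x ^ 4 := by
    have hsin_rem := ((by fun_prop : Continuous fun x => κ * √(1 + b * z x)).tendsto 0)
      |>.isBigO_mul isBigO_sin_sub_cubic
    have hsqrt_rem := ((by fun_prop : Continuous fun x : ℝ => κ * (x - x ^ 3 / 6)).tendsto 0)
      |>.isBigO_mul hsqrt
    have hz_rem := ((by fun_prop : Continuous fun x : ℝ =>
      κ * (b / 2 * (x - x ^ 3 / 6) - (b - a) * (x + k * x ^ 3))).tendsto 0).isBigO_mul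
        isBigO_sin_half_sq_sub
    have hquintic := ((by fun_prop : Continuous fun x : ℝ =>
      κ * x * (-(b / 48) - k * (b - a) / 4)).tendsto 0).isBigO_mul
        (isBigO_refl (fun x : ℝ => x ^ 4) _)
    refine (((hsin_rem.add hsqrt_rem).add hz_rem).add hquintic).congr_left fun x => ?_
    simp only [z, k]
    ring
  have hden : Tendsto (fun x => (1 + (b - a) * z x)⁻¹) (𝓝 0) (𝓝 1) := by
    simpa [z] using
      ((by fun_prop : Continuous fun x => 1 + (b - a) * z x).tendsto 0).inv₀ (by simp [z])
  have hne : ∀ᶠ x in 𝓝 0, 1 + (b - a) * z x ≠ 0 :=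
    (by fun_prop : Continuous fun x => 1 + (b - a) * z x).continuousAt.eventually_ne (by simp [z])
  refine (hden.isBigO_mul hnum).congr' ?_ EventuallyEq.rfl
  filter_upwards [hne] with x hx
  simp only [z] at hx ⊢
  field_simp

theorem discrete_phase_shift_expansion_general
    (c al θ ς : ℝ) (hc : 0 < c) (hal : 0 < al)
    (φd : ℝ → ℝ)
    (hφd : ∀ ξ ∈ Set.Ioo (0 : ℝ) Real.pi,
      φd ξ =
        Real.arccos ((1 - (4 * c ^ 2 * al ^ 2 * Real.sin (ξ / 2) ^ 2) * (1 + θ)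
            / (2 * (1 + 4 * ς ^ 2 / 3 * Real.sin (ξ / 2) ^ 2)))
          / Real.sqrt ((1 - (4 * c ^ 2 * al ^ 2 * Real.sin (ξ / 2) ^ 2) * (1 + θ)
              / (2 * (1 + 4 * ς ^ 2 / 3 * Real.sin (ξ / 2) ^ 2))) ^ 2
            + (c * al * Real.sin ξ) ^ 2
              / (1 + 4 * ς ^ 2 / 3 * Real.sin (ξ / 2) ^ 2)))) :
    (fun ξ : ℝ =>
        φd ξ - c * al * ξ
          - (c * al / 6) * ((c * al) ^ 2 * (3 * θ + 1) - 1 - ς ^ 2) * ξ ^ 3)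
      =O[𝓝[>] (0 : ℝ)] (fun ξ : ℝ => ξ ^ 4) := by
  have hD : ∀ᶠ ξ in 𝓝[>] 0,
      0 < 1 + (4 * ς ^ 2 / 3 - 2 * (c * al) ^ 2 * (1 + θ)) * sin (ξ / 2) ^ 2 :=
    ((by fun_prop : Continuous fun ξ =>
        1 + (4 * ς ^ 2 / 3 - 2 * (c * al) ^ 2 * (1 + θ)) * sin (ξ / 2) ^ 2).continuousAt
      |>.eventually (lt_mem_nhds (by simp))).filter_mono nhdsWithin_le_nhds
  refine ((isBigO_arctan_comp_sub (isBigO_tangent_sub (c * al) (2 * (c * al) ^ 2 * (1 + θ))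
    (4 * ς ^ 2 / 3))).mono nhdsWithin_le_nhds).congr' ?_ EventuallyEq.rfl
  filter_upwards [Ioo_mem_nhdsGT pi_pos, hD] with ξ hξ hDξ
  have hs : 0 < c * al * sin ξ := mul_pos (mul_pos hc hal) (sin_pos_of_pos_of_lt_pi hξ.1 hξ.2)
  rw [hφd ξ hξ, arccos_re_div_abs_eq_arctan hs (by positivity) hDξ]
  ring

/-- Long-wave expansion of the discrete phase shift of the
predictor–corrector scheme:
`φ̂(ξ) = cℵξ + (cℵ/6)((cℵ)²(3θ+1) − 1 − ς²)ξ³ + O(ξ⁴)` as `ξ → 0⁺`. -/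
theorem discrete_phase_shift_expansion
    (c al θ ς : ℝ) (hc : 0 < c) (hal : 0 < al) (hθ : θ ∈ Set.Icc (0 : ℝ) 1)
    (φd : ℝ → ℝ)
    (hφd : ∀ ξ ∈ Set.Ioo (0 : ℝ) Real.pi,
      φd ξ =
        Real.arccos ((1 - (4 * c ^ 2 * al ^ 2 * Real.sin (ξ / 2) ^ 2) * (1 + θ)
            / (2 * (1 + 4 * ς ^ 2 / 3 * Real.sin (ξ / 2) ^ 2)))
          / Real.sqrt ((1 - (4 * c ^ 2 * al ^ 2 * Real.sin (ξ / 2) ^ 2) * (1 + θ)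
              / (2 * (1 + 4 * ς ^ 2 / 3 * Real.sin (ξ / 2) ^ 2))) ^ 2
            + (c * al * Real.sin ξ) ^ 2
              / (1 + 4 * ς ^ 2 / 3 * Real.sin (ξ / 2) ^ 2)))) :
    (fun ξ : ℝ =>
        φd ξ - c * al * ξ
          - (c * al / 6) * ((c * al) ^ 2 * (3 * θ + 1) - 1 - ς ^ 2) * ξ ^ 3)
      =O[𝓝[>] (0 : ℝ)] (fun ξ : ℝ => ξ ^ 4) :=
  discrete_phase_shift_expansion_general c al θ ς hc hal φd hφd
end

section
/- Curvature inequality for the smoothed bottom step: Let h₀ > h_s > 0, set Δb = h₀ − h_s, and let ℓ > 0. Then the inequality (π²·Δb/(2ℓ²))·sin ζ > −2/( (h₀ + h_s)/2 − (Δb/2)·sin ζ ) holds for all ζ ∈ [−π/2, π/2] if and only if ℓ > (π/2)·√(h₀·Δb). Moreover, since h₀ ≥ Δb, the condition ℓ > (π/2)·√(h₀·Δb) implies ℓ > π·Δb/2. -/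
/-- Curvature inequality for the smoothed bottom step: the well-posedness
condition holds for all `ζ ∈ [−π/2, π/2]` iff `ℓ > (π/2)√(h₀Δb)`; moreover
this condition implies the slope condition `ℓ > πΔb/2`. -/
theorem smoothed_step_curvature_inequality
    (h₀ hs ℓ : ℝ) (h1 : h₀ > hs) (h2 : hs > 0) (hℓ : 0 < ℓ)
    (Δb : ℝ) (hΔ : Δb = h₀ - hs) :
    ((∀ ζ ∈ Set.Icc (-(Real.pi / 2)) (Real.pi / 2),
        Real.pi ^ 2 * Δb / (2 * ℓ ^ 2) * Real.sin ζ
          > -2 / ((h₀ + hs) / 2 - Δb / 2 * Real.sin ζ))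
      ↔ ℓ > Real.pi / 2 * Real.sqrt (h₀ * Δb)) ∧
    (ℓ > Real.pi / 2 * Real.sqrt (h₀ * Δb) → ℓ > Real.pi * Δb / 2) := by
  have hπ : 0 < Real.pi := Real.pi_pos
  have hΔpos : 0 < Δb := by rw [hΔ]; linarith
  have h₀pos : 0 < h₀ := by linarith
  have hprod : 0 ≤ h₀ * Δb := by positivity
  have hsqrt : Real.sqrt (h₀ * Δb) ^ 2 = h₀ * Δb := Real.sq_sqrt hprod
  have hsqrtnn : 0 ≤ Real.sqrt (h₀ * Δb) := Real.sqrt_nonneg _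
  constructor
  · constructor
    · intro h
      have hmem : -(Real.pi / 2) ∈ Set.Icc (-(Real.pi / 2)) (Real.pi / 2) :=
        ⟨le_refl _, by linarith⟩
      have := h _ hmem
      rw [Real.sin_neg, Real.sin_pi_div_two] at this
      have hd : (h₀ + hs) / 2 - Δb / 2 * (-1) = h₀ := by rw [hΔ]; ring
      rw [hd] at this
      -- this : π²Δb/(2ℓ²) * (-1) > -2/h₀
      have h2' : -2 < Real.pi ^ 2 * Δb / (2 * ℓ ^ 2) * (-1) * h₀ :=
        (div_lt_iff₀ h₀pos).mp this
      have hℓ2 : 0 < 2 * ℓ ^ 2 := by positivity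
      have heq : Real.pi ^ 2 * Δb / (2 * ℓ ^ 2) * (-1) * h₀
          = -(Real.pi ^ 2 * Δb * h₀ / (2 * ℓ ^ 2)) := by ring
      rw [heq] at h2'
      have h3 : Real.pi ^ 2 * Δb * h₀ / (2 * ℓ ^ 2) < 2 := by linarith
      have hkey : Real.pi ^ 2 * Δb * h₀ < 4 * ℓ ^ 2 := by
        have := (div_lt_iff₀ hℓ2).mp h3
        linarith
      -- conclude ℓ > (π/2)√(h₀Δb)
      by_contra hc
      push_neg at hc
      nlinarith [hsqrt, hsqrtnn, hℓ]
    · intro hgt ζ hζ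
      have hs1 : -1 ≤ Real.sin ζ := Real.neg_one_le_sin ζ
      have hs2 : Real.sin ζ ≤ 1 := Real.sin_le_one ζ
      set s := Real.sin ζ with hsdef
      have hd : 0 < (h₀ + hs) / 2 - Δb / 2 * s := by nlinarith
      have hdle : (h₀ + hs) / 2 - Δb / 2 * s ≤ h₀ := by nlinarith
      rw [gt_iff_lt, div_lt_iff₀ hd]
      -- need : -2 < π²Δb/(2ℓ²) * s * d
      have hℓ2 : 0 < 2 * ℓ ^ 2 := by positivity
      have hkey : Real.pi ^ 2 * Δb * h₀ < 4 * ℓ ^ 2 := by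
        have hc2 := mul_self_lt_mul_self
          (mul_nonneg (by positivity) hsqrtnn) hgt
        nlinarith [hsqrt, hc2]
      have hA : 0 < Real.pi ^ 2 * Δb := by positivity
      set d := (h₀ + hs) / 2 - Δb / 2 * s with hddef
      have h_sd : 0 ≤ (s + 1) * d := mul_nonneg (by linarith) hd.le
      have hgoal : -(4 * ℓ ^ 2) < Real.pi ^ 2 * Δb * s * d := by
        nlinarith [mul_nonneg hA.le h_sd,
          mul_le_mul_of_nonneg_left hdle hA.le]
      have : -2 < Real.pi ^ 2 * Δb * s * d / (2 * ℓ ^ 2) := by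
        rw [lt_div_iff₀ hℓ2]; nlinarith
      calc (-2 : ℝ) < Real.pi ^ 2 * Δb * s * d / (2 * ℓ ^ 2) := this
        _ = Real.pi ^ 2 * Δb / (2 * ℓ ^ 2) * s * d := by ring
  · intro hgt
    have hΔle : Δb ≤ h₀ := by rw [hΔ]; linarith
    have hle : Δb ≤ Real.sqrt (h₀ * Δb) := by
      have h4 : Real.sqrt (Δb * Δb) ≤ Real.sqrt (h₀ * Δb) :=
        Real.sqrt_le_sqrt (by nlinarith)
      rwa [Real.sqrt_mul_self hΔpos.le] at h4
    nlinarith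
end

section
/- Bottom pressure relation for the Serre–Green–Naghdi equations (two horizontal dimensions): Let g > 0 and let u : ℝ² × ℝ → ℝ², h, η : ℝ² × ℝ → ℝ be smooth with total depth H = h + η > 0 everywhere. Define the material derivative 𝒟f = f_t + u·∇f (∇ the spatial gradient), ℛ₁ = 𝒟(div u) − (div u)², ℛ₂ = 𝒟(𝒟h), the non-hydrostatic pressures ℘ = (H³/3)ℛ₁ + (H²/2)ℛ₂ and p̌ = (H²/2)ℛ₁ + H·ℛ₂, and set r = 4 + |∇h|² and ℛ = −g·∇η·∇h + uᵀ(∇²h)u + h_tt + 2u·∇h_t, where ∇²h is the spatial Hessian of h. If u satisfies the momentum equation u_t + (u·∇)u = −g∇η + (∇℘ − p̌·∇h)/H at every point, then at every point r·p̌ = 6℘/H + H·ℛ + ∇℘·∇h. -/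
/-- Partial derivative in the first horizontal variable. -/
noncomputable def pd1 (f : ℝ → ℝ → ℝ → ℝ) (x y t : ℝ) : ℝ :=
  deriv (fun s => f s y t) x

/-- Partial derivative in the second horizontal variable. -/
noncomputable def pd2 (f : ℝ → ℝ → ℝ → ℝ) (x y t : ℝ) : ℝ :=
  deriv (fun s => f x s t) y

/-- Partial derivative in the temporal variable. -/
noncomputable def pdt (f : ℝ → ℝ → ℝ → ℝ) (x y t : ℝ) : ℝ :=
  deriv (fun s => f x y s) t

namespace SGNaux

variable {f : ℝ → ℝ → ℝ → ℝ}

lemma hasDerivAt1 (hf : ContDiff ℝ (⊤ : ℕ∞) (fun p : ℝ × ℝ × ℝ => f p.1 p.2.1 p.2.2)) (x y t : ℝ) :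
    HasDerivAt (fun s => f s y t)
      (fderiv ℝ (fun p : ℝ × ℝ × ℝ => f p.1 p.2.1 p.2.2) (x, y, t) (1, 0, 0)) x := by
  have hφ : HasDerivAt (fun s : ℝ => ((s, y, t) : ℝ × ℝ × ℝ)) ((1:ℝ), (0:ℝ), (0:ℝ)) x :=
    (hasDerivAt_id x).prodMk ((hasDerivAt_const x y).prodMk (hasDerivAt_const x t))
  exact ((hf.differentiable (by simp) (x, y, t)).hasFDerivAt).comp_hasDerivAt x hφ

lemma hasDerivAt2 (hf : ContDiff ℝ (⊤ : ℕ∞) (fun p : ℝ × ℝ × ℝ => f p.1 p.2.1 p.2.2)) (x y t : ℝ) :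
    HasDerivAt (fun s => f x s t)
      (fderiv ℝ (fun p : ℝ × ℝ × ℝ => f p.1 p.2.1 p.2.2) (x, y, t) (0, 1, 0)) y := by
  have hφ : HasDerivAt (fun s : ℝ => ((x, s, t) : ℝ × ℝ × ℝ)) ((0:ℝ), (1:ℝ), (0:ℝ)) y :=
    (hasDerivAt_const y x).prodMk ((hasDerivAt_id y).prodMk (hasDerivAt_const y t))
  exact ((hf.differentiable (by simp) (x, y, t)).hasFDerivAt).comp_hasDerivAt y hφ

lemma hasDerivAtT (hf : ContDiff ℝ (⊤ : ℕ∞) (fun p : ℝ × ℝ × ℝ => f p.1 p.2.1 p.2.2)) (x y t : ℝ) :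
    HasDerivAt (fun s => f x y s)
      (fderiv ℝ (fun p : ℝ × ℝ × ℝ => f p.1 p.2.1 p.2.2) (x, y, t) (0, 0, 1)) t := by
  have hφ : HasDerivAt (fun s : ℝ => ((x, y, s) : ℝ × ℝ × ℝ)) ((0:ℝ), (0:ℝ), (1:ℝ)) t :=
    (hasDerivAt_const t x).prodMk ((hasDerivAt_const t y).prodMk (hasDerivAt_id t))
  exact ((hf.differentiable (by simp) (x, y, t)).hasFDerivAt).comp_hasDerivAt t hφ

lemma pd1_eq (hf : ContDiff ℝ (⊤ : ℕ∞) (fun p : ℝ × ℝ × ℝ => f p.1 p.2.1 p.2.2)) (x y t : ℝ) :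
    pd1 f x y t = fderiv ℝ (fun p : ℝ × ℝ × ℝ => f p.1 p.2.1 p.2.2) (x, y, t) (1, 0, 0) :=
  (hasDerivAt1 hf x y t).deriv

lemma pd2_eq (hf : ContDiff ℝ (⊤ : ℕ∞) (fun p : ℝ × ℝ × ℝ => f p.1 p.2.1 p.2.2)) (x y t : ℝ) :
    pd2 f x y t = fderiv ℝ (fun p : ℝ × ℝ × ℝ => f p.1 p.2.1 p.2.2) (x, y, t) (0, 1, 0) :=
  (hasDerivAt2 hf x y t).deriv

lemma pdt_eq (hf : ContDiff ℝ (⊤ : ℕ∞) (fun p : ℝ × ℝ × ℝ => f p.1 p.2.1 p.2.2)) (x y t : ℝ) :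
    pdt f x y t = fderiv ℝ (fun p : ℝ × ℝ × ℝ => f p.1 p.2.1 p.2.2) (x, y, t) (0, 0, 1) :=
  (hasDerivAtT hf x y t).deriv

lemma contDiff_pdv (hf : ContDiff ℝ (⊤ : ℕ∞) (fun p : ℝ × ℝ × ℝ => f p.1 p.2.1 p.2.2)) (v : ℝ × ℝ × ℝ) :
    ContDiff ℝ (⊤ : ℕ∞) (fun p : ℝ × ℝ × ℝ =>
      fderiv ℝ (fun q : ℝ × ℝ × ℝ => f q.1 q.2.1 q.2.2) p v) :=
  (hf.fderiv_right (by simp)).clm_apply contDiff_const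

lemma contDiff_pd1 (hf : ContDiff ℝ (⊤ : ℕ∞) (fun p : ℝ × ℝ × ℝ => f p.1 p.2.1 p.2.2)) :
    ContDiff ℝ (⊤ : ℕ∞) (fun p : ℝ × ℝ × ℝ => pd1 f p.1 p.2.1 p.2.2) := by
  have e : (fun p : ℝ × ℝ × ℝ => pd1 f p.1 p.2.1 p.2.2)
      = fun p : ℝ × ℝ × ℝ => fderiv ℝ (fun q : ℝ × ℝ × ℝ => f q.1 q.2.1 q.2.2) p (1, 0, 0) :=
    funext fun p => pd1_eq hf p.1 p.2.1 p.2.2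
  rw [e]; exact contDiff_pdv hf _

lemma contDiff_pd2 (hf : ContDiff ℝ (⊤ : ℕ∞) (fun p : ℝ × ℝ × ℝ => f p.1 p.2.1 p.2.2)) :
    ContDiff ℝ (⊤ : ℕ∞) (fun p : ℝ × ℝ × ℝ => pd2 f p.1 p.2.1 p.2.2) := by
  have e : (fun p : ℝ × ℝ × ℝ => pd2 f p.1 p.2.1 p.2.2)
      = fun p : ℝ × ℝ × ℝ => fderiv ℝ (fun q : ℝ × ℝ × ℝ => f q.1 q.2.1 q.2.2) p (0, 1, 0) :=
    funext fun p => pd2_eq hf p.1 p.2.1 p.2.2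
  rw [e]; exact contDiff_pdv hf _

lemma contDiff_pdt (hf : ContDiff ℝ (⊤ : ℕ∞) (fun p : ℝ × ℝ × ℝ => f p.1 p.2.1 p.2.2)) :
    ContDiff ℝ (⊤ : ℕ∞) (fun p : ℝ × ℝ × ℝ => pdt f p.1 p.2.1 p.2.2) := by
  have e : (fun p : ℝ × ℝ × ℝ => pdt f p.1 p.2.1 p.2.2)
      = fun p : ℝ × ℝ × ℝ => fderiv ℝ (fun q : ℝ × ℝ × ℝ => f q.1 q.2.1 q.2.2) p (0, 0, 1) :=
    funext fun p => pdt_eq hf p.1 p.2.1 p.2.2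
  rw [e]; exact contDiff_pdv hf _

lemma second_eq (hf : ContDiff ℝ (⊤ : ℕ∞) (fun p : ℝ × ℝ × ℝ => f p.1 p.2.1 p.2.2))
    (q : ℝ × ℝ × ℝ) (v w : ℝ × ℝ × ℝ) :
    fderiv ℝ (fun p : ℝ × ℝ × ℝ =>
        fderiv ℝ (fun r : ℝ × ℝ × ℝ => f r.1 r.2.1 r.2.2) p v) q w
      = fderiv ℝ (fderiv ℝ (fun r : ℝ × ℝ × ℝ => f r.1 r.2.1 r.2.2)) q w v := by
  have hc : DifferentiableAt ℝ (fderiv ℝ (fun r : ℝ × ℝ × ℝ => f r.1 r.2.1 r.2.2)) q :=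
    ((hf.fderiv_right (m := (⊤ : ℕ∞)) (by simp)).differentiable (by simp)) q
  rw [fderiv_clm_apply hc (differentiableAt_const v)]
  simp

lemma symm2 (hf : ContDiff ℝ (⊤ : ℕ∞) (fun p : ℝ × ℝ × ℝ => f p.1 p.2.1 p.2.2))
    (q v w : ℝ × ℝ × ℝ) :
    fderiv ℝ (fderiv ℝ (fun r : ℝ × ℝ × ℝ => f r.1 r.2.1 r.2.2)) q v w
      = fderiv ℝ (fderiv ℝ (fun r : ℝ × ℝ × ℝ => f r.1 r.2.1 r.2.2)) q w v :=
  (hf.contDiffAt.isSymmSndFDerivAt (by rw [minSmoothness_of_isRCLikeNormedField]; exact WithTop.coe_le_coe.mpr le_top)) v w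
lemma pd_swap_t1 (hf : ContDiff ℝ (⊤ : ℕ∞) (fun p : ℝ × ℝ × ℝ => f p.1 p.2.1 p.2.2)) (x y t : ℝ) :
    pdt (pd1 f) x y t = pd1 (pdt f) x y t := by
  have e1 : (fun p : ℝ × ℝ × ℝ => pd1 f p.1 p.2.1 p.2.2)
      = fun p : ℝ × ℝ × ℝ => fderiv ℝ (fun r : ℝ × ℝ × ℝ => f r.1 r.2.1 r.2.2) p (1, 0, 0) :=
    funext fun p => pd1_eq hf p.1 p.2.1 p.2.2
  have e3 : (fun p : ℝ × ℝ × ℝ => pdt f p.1 p.2.1 p.2.2)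
      = fun p : ℝ × ℝ × ℝ => fderiv ℝ (fun r : ℝ × ℝ × ℝ => f r.1 r.2.1 r.2.2) p (0, 0, 1) :=
    funext fun p => pdt_eq hf p.1 p.2.1 p.2.2
  rw [pdt_eq (contDiff_pd1 hf), pd1_eq (contDiff_pdt hf), e1, e3,
    second_eq hf, second_eq hf, symm2 hf]

lemma pd_swap_t2 (hf : ContDiff ℝ (⊤ : ℕ∞) (fun p : ℝ × ℝ × ℝ => f p.1 p.2.1 p.2.2)) (x y t : ℝ) :
    pdt (pd2 f) x y t = pd2 (pdt f) x y t := by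
  have e2 : (fun p : ℝ × ℝ × ℝ => pd2 f p.1 p.2.1 p.2.2)
      = fun p : ℝ × ℝ × ℝ => fderiv ℝ (fun r : ℝ × ℝ × ℝ => f r.1 r.2.1 r.2.2) p (0, 1, 0) :=
    funext fun p => pd2_eq hf p.1 p.2.1 p.2.2
  have e3 : (fun p : ℝ × ℝ × ℝ => pdt f p.1 p.2.1 p.2.2)
      = fun p : ℝ × ℝ × ℝ => fderiv ℝ (fun r : ℝ × ℝ × ℝ => f r.1 r.2.1 r.2.2) p (0, 0, 1) :=
    funext fun p => pdt_eq hf p.1 p.2.1 p.2.2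
  rw [pdt_eq (contDiff_pd2 hf), pd2_eq (contDiff_pdt hf), e2, e3,
    second_eq hf, second_eq hf, symm2 hf]


lemma hd1 (hf : ContDiff ℝ (⊤ : ℕ∞) (fun p : ℝ × ℝ × ℝ => f p.1 p.2.1 p.2.2)) (x y t : ℝ) :
    HasDerivAt (fun s => f s y t) (pd1 f x y t) x := by
  rw [pd1_eq hf]; exact hasDerivAt1 hf x y t

lemma hd2 (hf : ContDiff ℝ (⊤ : ℕ∞) (fun p : ℝ × ℝ × ℝ => f p.1 p.2.1 p.2.2)) (x y t : ℝ) :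
    HasDerivAt (fun s => f x s t) (pd2 f x y t) y := by
  rw [pd2_eq hf]; exact hasDerivAt2 hf x y t

lemma hdt (hf : ContDiff ℝ (⊤ : ℕ∞) (fun p : ℝ × ℝ × ℝ => f p.1 p.2.1 p.2.2)) (x y t : ℝ) :
    HasDerivAt (fun s => f x y s) (pdt f x y t) t := by
  rw [pdt_eq hf]; exact hasDerivAtT hf x y t

end SGNaux


open SGNaux in
/-- Bottom pressure relation for the Serre–Green–Naghdi equations (two
horizontal dimensions): if the momentum equation
`u_t + (u·∇)u = −g∇η + (∇℘ − p̌∇h)/H` holds, then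
`r p̌ = 6℘/H + Hℛ + ∇℘·∇h` with `r = 4 + |∇h|²`. -/
theorem sgn_bottom_pressure_relation_2D
    (g : ℝ) (hg : 0 < g)
    (u1 u2 h η : ℝ → ℝ → ℝ → ℝ)
    (hu1 : ContDiff ℝ (⊤ : ℕ∞) (fun p : ℝ × ℝ × ℝ => u1 p.1 p.2.1 p.2.2))
    (hu2 : ContDiff ℝ (⊤ : ℕ∞) (fun p : ℝ × ℝ × ℝ => u2 p.1 p.2.1 p.2.2))
    (hh : ContDiff ℝ (⊤ : ℕ∞) (fun p : ℝ × ℝ × ℝ => h p.1 p.2.1 p.2.2))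
    (hη : ContDiff ℝ (⊤ : ℕ∞) (fun p : ℝ × ℝ × ℝ => η p.1 p.2.1 p.2.2))
    (H : ℝ → ℝ → ℝ → ℝ) (hH : ∀ x y t, H x y t = h x y t + η x y t)
    (hHpos : ∀ x y t, 0 < H x y t)
    (divu Dh R1 R2 P pb r R : ℝ → ℝ → ℝ → ℝ)
    (hdiv : ∀ x y t, divu x y t = pd1 u1 x y t + pd2 u2 x y t)
    (hDh : ∀ x y t, Dh x y t
      = pdt h x y t + u1 x y t * pd1 h x y t + u2 x y t * pd2 h x y t)
    (hR1 : ∀ x y t, R1 x y t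
      = pdt divu x y t + u1 x y t * pd1 divu x y t + u2 x y t * pd2 divu x y t
        - (divu x y t) ^ 2)
    (hR2 : ∀ x y t, R2 x y t
      = pdt Dh x y t + u1 x y t * pd1 Dh x y t + u2 x y t * pd2 Dh x y t)
    (hP : ∀ x y t, P x y t
      = (H x y t) ^ 3 / 3 * R1 x y t + (H x y t) ^ 2 / 2 * R2 x y t)
    (hpb : ∀ x y t, pb x y t
      = (H x y t) ^ 2 / 2 * R1 x y t + H x y t * R2 x y t)
    (hr : ∀ x y t, r x y t = 4 + (pd1 h x y t) ^ 2 + (pd2 h x y t) ^ 2)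
    (hR : ∀ x y t, R x y t
      = -g * (pd1 η x y t * pd1 h x y t + pd2 η x y t * pd2 h x y t)
        + (u1 x y t * (u1 x y t * pd1 (pd1 h) x y t + u2 x y t * pd2 (pd1 h) x y t)
           + u2 x y t * (u1 x y t * pd1 (pd2 h) x y t + u2 x y t * pd2 (pd2 h) x y t))
        + pdt (pdt h) x y t
        + 2 * (u1 x y t * pd1 (pdt h) x y t + u2 x y t * pd2 (pdt h) x y t))
    (hmom1 : ∀ x y t,
      pdt u1 x y t + u1 x y t * pd1 u1 x y t + u2 x y t * pd2 u1 x y t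
        = -g * pd1 η x y t
          + (pd1 P x y t - pb x y t * pd1 h x y t) / H x y t)
    (hmom2 : ∀ x y t,
      pdt u2 x y t + u1 x y t * pd1 u2 x y t + u2 x y t * pd2 u2 x y t
        = -g * pd2 η x y t
          + (pd2 P x y t - pb x y t * pd2 h x y t) / H x y t) :
    ∀ x y t, r x y t * pb x y t
      = 6 * P x y t / H x y t + H x y t * R x y t
        + (pd1 P x y t * pd1 h x y t + pd2 P x y t * pd2 h x y t) := by
  intro x y t
  have hH0 : H x y t ≠ 0 := (hHpos x y t).ne'
  -- smoothness of the partial derivatives of h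
  have h1h := contDiff_pd1 hh
  have h2h := contDiff_pd2 hh
  have hth := contDiff_pdt hh
  -- expansion of the three partial derivatives of Dh
  have efun1 : (fun s => Dh s y t)
      = fun s => pdt h s y t + (u1 s y t * pd1 h s y t + u2 s y t * pd2 h s y t) :=
    funext fun s => by rw [hDh]; ring
  have efun2 : (fun s => Dh x s t)
      = fun s => pdt h x s t + (u1 x s t * pd1 h x s t + u2 x s t * pd2 h x s t) :=
    funext fun s => by rw [hDh]; ring
  have efunt : (fun s => Dh x y s)
      = fun s => pdt h x y s + (u1 x y s * pd1 h x y s + u2 x y s * pd2 h x y s) :=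
    funext fun s => by rw [hDh]; ring
  have e1Dh : pd1 Dh x y t
      = pd1 (pdt h) x y t
        + (pd1 u1 x y t * pd1 h x y t + u1 x y t * pd1 (pd1 h) x y t)
        + (pd1 u2 x y t * pd2 h x y t + u2 x y t * pd1 (pd2 h) x y t) := by
    have hd := ((hd1 hth x y t).add
      (((hd1 hu1 x y t).mul (hd1 h1h x y t)).add ((hd1 hu2 x y t).mul (hd1 h2h x y t))))
    show deriv (fun s => Dh s y t) x = _
    rw [efun1]; exact hd.deriv.trans (by ring)
  have e2Dh : pd2 Dh x y t
      = pd2 (pdt h) x y t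
        + (pd2 u1 x y t * pd1 h x y t + u1 x y t * pd2 (pd1 h) x y t)
        + (pd2 u2 x y t * pd2 h x y t + u2 x y t * pd2 (pd2 h) x y t) := by
    have hd := ((hd2 hth x y t).add
      (((hd2 hu1 x y t).mul (hd2 h1h x y t)).add ((hd2 hu2 x y t).mul (hd2 h2h x y t))))
    show deriv (fun s => Dh x s t) y = _
    rw [efun2]; exact hd.deriv.trans (by ring)
  have etDh : pdt Dh x y t
      = pdt (pdt h) x y t
        + (pdt u1 x y t * pd1 h x y t + u1 x y t * pdt (pd1 h) x y t)
        + (pdt u2 x y t * pd2 h x y t + u2 x y t * pdt (pd2 h) x y t) := by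
    have hd := ((hdt hth x y t).add
      (((hdt hu1 x y t).mul (hdt h1h x y t)).add ((hdt hu2 x y t).mul (hdt h2h x y t))))
    show deriv (fun s => Dh x y s) t = _
    rw [efunt]; exact hd.deriv.trans (by ring)
  -- key identity: R2 = R + g ∇η·∇h + (Du)·∇h
  have key : R2 x y t
      = R x y t
        + g * (pd1 η x y t * pd1 h x y t + pd2 η x y t * pd2 h x y t)
        + (pdt u1 x y t + u1 x y t * pd1 u1 x y t + u2 x y t * pd2 u1 x y t) * pd1 h x y t
        + (pdt u2 x y t + u1 x y t * pd1 u2 x y t + u2 x y t * pd2 u2 x y t) * pd2 h x y t := by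
    rw [hR2, hR, etDh, e1Dh, e2Dh, pd_swap_t1 hh, pd_swap_t2 hh]
    ring
  -- momentum equations, cleared of denominators
  have m1 : pd1 P x y t
      = pb x y t * pd1 h x y t
        + H x y t * ((pdt u1 x y t + u1 x y t * pd1 u1 x y t + u2 x y t * pd2 u1 x y t)
            + g * pd1 η x y t) := by
    have h1 := hmom1 x y t
    field_simp at h1
    linarith [h1]
  have m2 : pd2 P x y t
      = pb x y t * pd2 h x y t
        + H x y t * ((pdt u2 x y t + u1 x y t * pd1 u2 x y t + u2 x y t * pd2 u2 x y t)
            + g * pd2 η x y t) := by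
    have h2 := hmom2 x y t
    field_simp at h2
    linarith [h2]
  have hP6 : 6 * P x y t / H x y t
      = 2 * (H x y t) ^ 2 * R1 x y t + 3 * H x y t * R2 x y t := by
    rw [hP]; field_simp; ring
  rw [hP6, hr, m1, m2, hpb]
  linear_combination (H x y t) * key
end

section
/- Elliptic equation for the non-hydrostatic pressure (one horizontal dimension): Let g > 0 and let u, h, η : ℝ × ℝ → ℝ be smooth with total depth H = h + η > 0 everywhere. Define ℛ₁ = u_{xt} + u·u_{xx} − u_x², ℛ₂ = h_{tt} + 2u·h_{xt} + u²·h_{xx} + (u_t + u·u_x)·h_x, the non-hydrostatic pressures ℘ = (H³/3)ℛ₁ + (H²/2)ℛ₂ and p̌ = (H²/2)ℛ₁ + H·ℛ₂, and set r = 4 + h_x², ℛ = −g·η_x·h_x + u²·h_{xx} + h_{tt} + 2u·h_{xt}, and F = [g·η_x + ℛ·h_x/r]_x − 6ℛ/(H·r) + 2u_x². If u satisfies the momentum equation u_t + u·u_x + g·η_x = (℘_x − p̌·h_x)/H at every point, then at every point [4℘_x/(H·r)]_x − 6·[ (2/H³)·(r − 3)/r + (h_x/(H²·r))_x ]·℘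 = F. -/
/-- Partial derivative in the first (spatial) variable. -/
noncomputable def px (f : ℝ → ℝ → ℝ) (x t : ℝ) : ℝ := deriv (fun s => f s t) x

/-- Partial derivative in the second (temporal) variable. -/
noncomputable def pt (f : ℝ → ℝ → ℝ) (x t : ℝ) : ℝ := deriv (fun s => f x s) t


open Function

lemma hasDerivAt_px_fd {f : ℝ → ℝ → ℝ} (hf : ContDiff ℝ (⊤ : ℕ∞) (uncurry f)) (x t : ℝ) :
    HasDerivAt (fun s => f s t) (fderiv ℝ (uncurry f) (x, t) (1, 0)) x := by
  have h1 : HasFDerivAt (uncurry f) (fderiv ℝ (uncurry f) (x, t)) (x, t) :=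
    ((hf.differentiable (by simp)) (x, t)).hasFDerivAt
  have h2 : HasDerivAt (fun s : ℝ => (s, t)) ((1 : ℝ), (0 : ℝ)) x :=
    HasDerivAt.prodMk (hasDerivAt_id x) (hasDerivAt_const x t)
  exact h1.comp_hasDerivAt x h2

lemma hasDerivAt_pt_fd {f : ℝ → ℝ → ℝ} (hf : ContDiff ℝ (⊤ : ℕ∞) (uncurry f)) (x t : ℝ) :
    HasDerivAt (fun s => f x s) (fderiv ℝ (uncurry f) (x, t) (0, 1)) t := by
  have h1 : HasFDerivAt (uncurry f) (fderiv ℝ (uncurry f) (x, t)) (x, t) :=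
    ((hf.differentiable (by simp)) (x, t)).hasFDerivAt
  have h2 : HasDerivAt (fun s : ℝ => (x, s)) ((0 : ℝ), (1 : ℝ)) t :=
    HasDerivAt.prodMk (hasDerivAt_const t x) (hasDerivAt_id t)
  exact h1.comp_hasDerivAt t h2

lemma px_eq_fd {f : ℝ → ℝ → ℝ} (hf : ContDiff ℝ (⊤ : ℕ∞) (uncurry f)) (x t : ℝ) :
    px f x t = fderiv ℝ (uncurry f) (x, t) (1, 0) := (hasDerivAt_px_fd hf x t).deriv

lemma pt_eq_fd {f : ℝ → ℝ → ℝ} (hf : ContDiff ℝ (⊤ : ℕ∞) (uncurry f)) (x t : ℝ) :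
    pt f x t = fderiv ℝ (uncurry f) (x, t) (0, 1) := (hasDerivAt_pt_fd hf x t).deriv

lemma hasDerivAt_px {f : ℝ → ℝ → ℝ} (hf : ContDiff ℝ (⊤ : ℕ∞) (uncurry f)) (x t : ℝ) :
    HasDerivAt (fun s => f s t) (px f x t) x := px_eq_fd hf x t ▸ hasDerivAt_px_fd hf x t

lemma contDiff_px {f : ℝ → ℝ → ℝ} (hf : ContDiff ℝ (⊤ : ℕ∞) (uncurry f)) :
    ContDiff ℝ (⊤ : ℕ∞) (uncurry (px f)) := by
  have he : uncurry (px f) = fun p : ℝ × ℝ => fderiv ℝ (uncurry f) p ((1 : ℝ), (0 : ℝ)) := by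
    funext p
    exact px_eq_fd hf p.1 p.2
  rw [he]
  exact (ContinuousLinearMap.apply ℝ ℝ ((1 : ℝ), (0 : ℝ))).contDiff.comp
    (hf.fderiv_right (by simp))

lemma contDiff_pt {f : ℝ → ℝ → ℝ} (hf : ContDiff ℝ (⊤ : ℕ∞) (uncurry f)) :
    ContDiff ℝ (⊤ : ℕ∞) (uncurry (pt f)) := by
  have he : uncurry (pt f) = fun p : ℝ × ℝ => fderiv ℝ (uncurry f) p ((0 : ℝ), (1 : ℝ)) := by
    funext p
    exact pt_eq_fd hf p.1 p.2
  rw [he]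
  exact (ContinuousLinearMap.apply ℝ ℝ ((0 : ℝ), (1 : ℝ))).contDiff.comp
    (hf.fderiv_right (by simp))

lemma pt_px_comm {f : ℝ → ℝ → ℝ} (hf : ContDiff ℝ (⊤ : ℕ∞) (uncurry f)) (x t : ℝ) :
    pt (px f) x t = px (pt f) x t := by
  have hfd : ContDiff ℝ (⊤ : ℕ∞) (fderiv ℝ (uncurry f)) := hf.fderiv_right (by simp)
  have h1 : HasFDerivAt (fderiv ℝ (uncurry f))
      (fderiv ℝ (fderiv ℝ (uncurry f)) (x, t)) (x, t) :=
    ((hfd.differentiable (by simp)) (x, t)).hasFDerivAt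
  have hsymm : IsSymmSndFDerivAt ℝ (uncurry f) (x, t) :=
    hf.contDiffAt.isSymmSndFDerivAt (by rw [minSmoothness_of_isRCLikeNormedField]; exact WithTop.coe_le_coe.mpr le_top)
  have e1 : pt (px f) x t = fderiv ℝ (fderiv ℝ (uncurry f)) (x, t) (0, 1) (1, 0) := by
    have h2 : HasDerivAt (fun s : ℝ => (x, s)) ((0 : ℝ), (1 : ℝ)) t :=
      HasDerivAt.prodMk (hasDerivAt_const t x) (hasDerivAt_id t)
    have hA : HasDerivAt (fun s : ℝ => fderiv ℝ (uncurry f) (x, s))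
        (fderiv ℝ (fderiv ℝ (uncurry f)) (x, t) ((0 : ℝ), (1 : ℝ))) t :=
      h1.comp_hasDerivAt t h2
    have hB := hA.clm_apply (hasDerivAt_const t (((1 : ℝ), (0 : ℝ)) : ℝ × ℝ))
    have hfun : (fun s : ℝ => px f x s)
        = fun s : ℝ => fderiv ℝ (uncurry f) (x, s) ((1 : ℝ), (0 : ℝ)) := by
      funext s; exact px_eq_fd hf x s
    have : pt (px f) x t = deriv (fun s : ℝ => fderiv ℝ (uncurry f) (x, s) (1, 0)) t := by
      unfold pt; rw [hfun]
    rw [this]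
    simpa using hB.deriv
  have e2 : px (pt f) x t = fderiv ℝ (fderiv ℝ (uncurry f)) (x, t) (1, 0) (0, 1) := by
    have h2 : HasDerivAt (fun s : ℝ => (s, t)) ((1 : ℝ), (0 : ℝ)) x :=
      HasDerivAt.prodMk (hasDerivAt_id x) (hasDerivAt_const x t)
    have hA : HasDerivAt (fun s : ℝ => fderiv ℝ (uncurry f) (s, t))
        (fderiv ℝ (fderiv ℝ (uncurry f)) (x, t) ((1 : ℝ), (0 : ℝ))) x :=
      h1.comp_hasDerivAt x h2
    have hB := hA.clm_apply (hasDerivAt_const x (((0 : ℝ), (1 : ℝ)) : ℝ × ℝ))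
    have hfun : (fun s : ℝ => pt f s t)
        = fun s : ℝ => fderiv ℝ (uncurry f) (s, t) ((0 : ℝ), (1 : ℝ)) := by
      funext s; exact pt_eq_fd hf s t
    have : px (pt f) x t = deriv (fun s : ℝ => fderiv ℝ (uncurry f) (s, t) (0, 1)) x := by
      unfold px; rw [hfun]
    rw [this]
    simpa using hB.deriv
  rw [e1, e2, hsymm (0, 1) (1, 0)]

/-- Elliptic equation for the non-hydrostatic pressure of the
one-dimensional Serre–Green–Naghdi equations: if the momentum equation
`u_t + u u_x + g η_x = (℘_x − p̌ h_x)/H` holds, then the non-hydrostatic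
pressure `℘` satisfies
`[4℘_x/(Hr)]_x − 6[(2/H³)(r−3)/r + (h_x/(H²r))_x]℘ = F`. -/
theorem sgn_pressure_elliptic_equation_1D
    (g : ℝ) (hg : 0 < g)
    (u h η : ℝ → ℝ → ℝ)
    (hu : ContDiff ℝ (⊤ : ℕ∞) (Function.uncurry u))
    (hh : ContDiff ℝ (⊤ : ℕ∞) (Function.uncurry h))
    (hη : ContDiff ℝ (⊤ : ℕ∞) (Function.uncurry η))
    (H : ℝ → ℝ → ℝ) (hH : ∀ x t, H x t = h x t + η x t)
    (hHpos : ∀ x t, 0 < H x t)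
    (R1 R2 P pb r R F : ℝ → ℝ → ℝ)
    (hR1 : ∀ x t, R1 x t
      = pt (px u) x t + u x t * px (px u) x t - (px u x t) ^ 2)
    (hR2 : ∀ x t, R2 x t
      = pt (pt h) x t + 2 * u x t * pt (px h) x t
        + (u x t) ^ 2 * px (px h) x t
        + (pt u x t + u x t * px u x t) * px h x t)
    (hP : ∀ x t, P x t
      = (H x t) ^ 3 / 3 * R1 x t + (H x t) ^ 2 / 2 * R2 x t)
    (hpb : ∀ x t, pb x t
      = (H x t) ^ 2 / 2 * R1 x t + H x t * R2 x t)
    (hr : ∀ x t, r x t = 4 + (px h x t) ^ 2)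
    (hR : ∀ x t, R x t
      = -g * px η x t * px h x t + (u x t) ^ 2 * px (px h) x t
        + pt (pt h) x t + 2 * u x t * pt (px h) x t)
    (hF : ∀ x t, F x t
      = px (fun x t => g * px η x t + R x t * px h x t / r x t) x t
        - 6 * R x t / (H x t * r x t) + 2 * (px u x t) ^ 2)
    (hmom : ∀ x t, pt u x t + u x t * px u x t + g * px η x t
        = (px P x t - pb x t * px h x t) / H x t) :
    ∀ x t, px (fun x t => 4 * px P x t / (H x t * r x t)) x t
        - 6 * ((2 / (H x t) ^ 3) * ((r x t - 3) / r x t)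
            + px (fun x t => px h x t / ((H x t) ^ 2 * r x t)) x t) * P x t
      = F x t := by
  have hH' : H = fun x t => h x t + η x t := funext fun x => funext fun t => hH x t
  subst hH'
  have hR1' : R1 = fun x t => pt (px u) x t + u x t * px (px u) x t - (px u x t) ^ 2 :=
    funext fun x => funext fun t => hR1 x t
  subst hR1'
  have hR2' : R2 = fun x t => pt (pt h) x t + 2 * u x t * pt (px h) x t
        + (u x t) ^ 2 * px (px h) x t
        + (pt u x t + u x t * px u x t) * px h x t :=
    funext fun x => funext fun t => hR2 x t
  subst hR2'
  have hr' : r = fun x t => 4 + (px h x t) ^ 2 := funext fun x => funext fun t => hr x t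
  subst hr'
  have hR' : R = fun x t => -g * px η x t * px h x t + (u x t) ^ 2 * px (px h) x t
        + pt (pt h) x t + 2 * u x t * pt (px h) x t :=
    funext fun x => funext fun t => hR x t
  subst hR'
  have hP' : P = fun x t => (h x t + η x t) ^ 3 / 3 * (pt (px u) x t + u x t * px (px u) x t - px u x t ^ 2) + (h x t + η x t) ^ 2 / 2 * (pt (pt h) x t + 2 * u x t * pt (px h) x t + u x t ^ 2 * px (px h) x t + (pt u x t + u x t * px u x t) * px h x t) := by
    funext a b; rw [hP a b]
  subst hP'
  have hpb' : pb = fun x t => (h x t + η x t) ^ 2 / 2 * (pt (px u) x t + u x t * px (px u) x t - px u x t ^ 2) + (h x t + η x t) * (pt (pt h) x t + 2 * u x t * pt (px h) x t + u x t ^ 2 * px (px h) x t + (pt u x t + u x t * px u x t) * px h x t) := by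
    funext a b; rw [hpb a b]
  subst hpb'
  intro x t
  rw [hF]
  beta_reduce
  clear hF hH hR1 hR2 hP hpb hr hR
  have hHpos' : ∀ a b : ℝ, 0 < h a b + η a b := fun a b => hHpos a b
  clear hHpos
  have hmom' : ∀ a b : ℝ, pt u a b + u a b * px u a b + g * px η a b
      = (px (fun x t => (h x t + η x t) ^ 3 / 3 * (pt (px u) x t + u x t * px (px u) x t - px u x t ^ 2) + (h x t + η x t) ^ 2 / 2 * (pt (pt h) x t + 2 * u x t * pt (px h) x t + u x t ^ 2 * px (px h) x t + (pt u x t + u x t * px u x t) * px h x t)) a b - ((h a b + η a b) ^ 2 / 2 * (pt (px u) a b + u a b * px (px u) a b - px u a b ^ 2) + (h a b + η a b) * (pt (pt h) a b + 2 * u a b * pt (px h) a b + u a b ^ 2 * px (px h) a b + (pt u a b + u a b * px u a b) * px h a b)) * px h a b) / (h a b + η a b) :=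
    fun a b => hmom a b
  clear hmom
  -- nonzero facts
  have hHne : ∀ a b : ℝ, h a b + η a b ≠ 0 := fun a b => ne_of_gt (hHpos' a b)
  have hrpos : ∀ a b : ℝ, (0:ℝ) < 4 + px h a b ^ 2 := fun a b => by positivity
  -- smoothness
  have cP : ContDiff ℝ (⊤ : ℕ∞) (uncurry (fun x t => (h x t + η x t) ^ 3 / 3 * (pt (px u) x t + u x t * px (px u) x t - px u x t ^ 2) + (h x t + η x t) ^ 2 / 2 * (pt (pt h) x t + 2 * u x t * pt (px h) x t + u x t ^ 2 * px (px h) x t + (pt u x t + u x t * px u x t) * px h x t))) := by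
    have c1 := contDiff_pt (contDiff_px hu)
    have c2 := contDiff_px (contDiff_px hu)
    have c3 := contDiff_px hu
    have c4 := contDiff_pt (contDiff_pt hh)
    have c5 := contDiff_pt (contDiff_px hh)
    have c6 := contDiff_px (contDiff_px hh)
    have c7 := contDiff_pt hu
    have c8 := contDiff_px hh
    fun_prop (disch := (intros; positivity))
  have cA : ContDiff ℝ (⊤ : ℕ∞) (uncurry (fun x t => g * px η x t + (-g * px η x t * px h x t + u x t ^ 2 * px (px h) x t + pt (pt h) x t + 2 * u x t * pt (px h) x t) * px h x t / (4 + px h x t ^ 2))) := by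
    have c1 := contDiff_px hη
    have c2 := contDiff_px (contDiff_px hh)
    have c3 := contDiff_pt (contDiff_pt hh)
    have c4 := contDiff_pt (contDiff_px hh)
    have c5 := contDiff_px hh
    fun_prop (disch := (intros; positivity))
  have cB : ContDiff ℝ (⊤ : ℕ∞) (uncurry (fun x t => px h x t / ((h x t + η x t) ^ 2 * (4 + px h x t ^ 2)))) := by
    have c1 := contDiff_px hh
    fun_prop (disch := (rintro ⟨a, b⟩; exact mul_ne_zero (pow_ne_zero _ (hHne a b)) (ne_of_gt (hrpos a b))))
  -- derivative of P in x, via momentum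
  have hdP : ∀ a b : ℝ, px (fun x t => (h x t + η x t) ^ 3 / 3 * (pt (px u) x t + u x t * px (px u) x t - px u x t ^ 2) + (h x t + η x t) ^ 2 / 2 * (pt (pt h) x t + 2 * u x t * pt (px h) x t + u x t ^ 2 * px (px h) x t + (pt u x t + u x t * px u x t) * px h x t)) a b
      = (h a b + η a b) * (pt u a b + u a b * px u a b + g * px η a b)
        + ((h a b + η a b) ^ 2 / 2 * (pt (px u) a b + u a b * px (px u) a b - px u a b ^ 2) + (h a b + η a b) * (pt (pt h) a b + 2 * u a b * pt (px h) a b + u a b ^ 2 * px (px h) a b + (pt u a b + u a b * px u a b) * px h a b)) * px h a b := by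
    intro a b
    have hm := hmom' a b
    rw [eq_div_iff (hHne a b)] at hm
    linear_combination -hm
  -- the key pointwise identity
  have key : ∀ a b : ℝ, 4 * px (fun x t => (h x t + η x t) ^ 3 / 3 * (pt (px u) x t + u x t * px (px u) x t - px u x t ^ 2) + (h x t + η x t) ^ 2 / 2 * (pt (pt h) x t + 2 * u x t * pt (px h) x t + u x t ^ 2 * px (px h) x t + (pt u x t + u x t * px u x t) * px h x t)) a b / ((h a b + η a b) * (4 + px h a b ^ 2))
      = pt u a b + u a b * px u a b + (g * px η a b + (-g * px η a b * px h a b + u a b ^ 2 * px (px h) a b + pt (pt h) a b + 2 * u a b * pt (px h) a b) * px h a b / (4 + px h a b ^ 2))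
        + 6 * (((h a b + η a b) ^ 3 / 3 * (pt (px u) a b + u a b * px (px u) a b - px u a b ^ 2) + (h a b + η a b) ^ 2 / 2 * (pt (pt h) a b + 2 * u a b * pt (px h) a b + u a b ^ 2 * px (px h) a b + (pt u a b + u a b * px u a b) * px h a b)) * (px h a b / ((h a b + η a b) ^ 2 * (4 + px h a b ^ 2)))) := by
    intro a b
    rw [hdP a b]
    have h1 := hHne a b
    have h2 := ne_of_gt (hrpos a b)
    field_simp
    ring
  -- derivative computation
  have total : HasDerivAt (fun s => pt u s t + u s t * px u s t + (g * px η s t + (-g * px η s t * px h s t + u s t ^ 2 * px (px h) s t + pt (pt h) s t + 2 * u s t * pt (px h) s t) * px h s t / (4 + px h s t ^ 2))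
        + 6 * (((h s t + η s t) ^ 3 / 3 * (pt (px u) s t + u s t * px (px u) s t - px u s t ^ 2) + (h s t + η s t) ^ 2 / 2 * (pt (pt h) s t + 2 * u s t * pt (px h) s t + u s t ^ 2 * px (px h) s t + (pt u s t + u s t * px u s t) * px h s t)) * (px h s t / ((h s t + η s t) ^ 2 * (4 + px h s t ^ 2)))))
      (px (pt u) x t + (px u x t * px u x t + u x t * px (px u) x t) + px (fun x t => g * px η x t + (-g * px η x t * px h x t + u x t ^ 2 * px (px h) x t + pt (pt h) x t + 2 * u x t * pt (px h) x t) * px h x t / (4 + px h x t ^ 2)) x t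
        + 6 * (px (fun x t => (h x t + η x t) ^ 3 / 3 * (pt (px u) x t + u x t * px (px u) x t - px u x t ^ 2) + (h x t + η x t) ^ 2 / 2 * (pt (pt h) x t + 2 * u x t * pt (px h) x t + u x t ^ 2 * px (px h) x t + (pt u x t + u x t * px u x t) * px h x t)) x t * (px h x t / ((h x t + η x t) ^ 2 * (4 + px h x t ^ 2))) + ((h x t + η x t) ^ 3 / 3 * (pt (px u) x t + u x t * px (px u) x t - px u x t ^ 2) + (h x t + η x t) ^ 2 / 2 * (pt (pt h) x t + 2 * u x t * pt (px h) x t + u x t ^ 2 * px (px h) x t + (pt u x t + u x t * px u x t) * px h x t)) * px (fun x t => px h x t / ((h x t + η x t) ^ 2 * (4 + px h x t ^ 2))) x t)) x := by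
    exact (((hasDerivAt_px (contDiff_pt hu) x t).add
        ((hasDerivAt_px hu x t).mul (hasDerivAt_px (contDiff_px hu) x t))).add
        (hasDerivAt_px cA x t)).add
      (((hasDerivAt_px cP x t).mul (hasDerivAt_px cB x t)).const_mul 6)
  have e1 : px (fun x t => 4 * px (fun x t => (h x t + η x t) ^ 3 / 3 * (pt (px u) x t + u x t * px (px u) x t - px u x t ^ 2) + (h x t + η x t) ^ 2 / 2 * (pt (pt h) x t + 2 * u x t * pt (px h) x t + u x t ^ 2 * px (px h) x t + (pt u x t + u x t * px u x t) * px h x t)) x t / ((h x t + η x t) * (4 + px h x t ^ 2))) x t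
      = px (pt u) x t + (px u x t * px u x t + u x t * px (px u) x t) + px (fun x t => g * px η x t + (-g * px η x t * px h x t + u x t ^ 2 * px (px h) x t + pt (pt h) x t + 2 * u x t * pt (px h) x t) * px h x t / (4 + px h x t ^ 2)) x t
        + 6 * (px (fun x t => (h x t + η x t) ^ 3 / 3 * (pt (px u) x t + u x t * px (px u) x t - px u x t ^ 2) + (h x t + η x t) ^ 2 / 2 * (pt (pt h) x t + 2 * u x t * pt (px h) x t + u x t ^ 2 * px (px h) x t + (pt u x t + u x t * px u x t) * px h x t)) x t * (px h x t / ((h x t + η x t) ^ 2 * (4 + px h x t ^ 2))) + ((h x t + η x t) ^ 3 / 3 * (pt (px u) x t + u x t * px (px u) x t - px u x t ^ 2) + (h x t + η x t) ^ 2 / 2 * (pt (pt h) x t + 2 * u x t * pt (px h) x t + u x t ^ 2 * px (px h) x t + (pt u x t + u x t * px u x t) * px h x t)) * px (fun x t => px h x t / ((h x t + η x t) ^ 2 * (4 + px h x t ^ 2))) x t) := by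
    have hfun : (fun s => 4 * px (fun x t => (h x t + η x t) ^ 3 / 3 * (pt (px u) x t + u x t * px (px u) x t - px u x t ^ 2) + (h x t + η x t) ^ 2 / 2 * (pt (pt h) x t + 2 * u x t * pt (px h) x t + u x t ^ 2 * px (px h) x t + (pt u x t + u x t * px u x t) * px h x t)) s t / ((h s t + η s t) * (4 + px h s t ^ 2)))
        = (fun s => pt u s t + u s t * px u s t + (g * px η s t + (-g * px η s t * px h s t + u s t ^ 2 * px (px h) s t + pt (pt h) s t + 2 * u s t * pt (px h) s t) * px h s t / (4 + px h s t ^ 2))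
            + 6 * (((h s t + η s t) ^ 3 / 3 * (pt (px u) s t + u s t * px (px u) s t - px u s t ^ 2) + (h s t + η s t) ^ 2 / 2 * (pt (pt h) s t + 2 * u s t * pt (px h) s t + u s t ^ 2 * px (px h) s t + (pt u s t + u s t * px u s t) * px h s t)) * (px h s t / ((h s t + η s t) ^ 2 * (4 + px h s t ^ 2))))) :=
      funext fun s => key s t
    show deriv (fun s => 4 * px (fun x t => (h x t + η x t) ^ 3 / 3 * (pt (px u) x t + u x t * px (px u) x t - px u x t ^ 2) + (h x t + η x t) ^ 2 / 2 * (pt (pt h) x t + 2 * u x t * pt (px h) x t + u x t ^ 2 * px (px h) x t + (pt u x t + u x t * px u x t) * px h x t)) s t / ((h s t + η s t) * (4 + px h s t ^ 2))) x = _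
    rw [hfun]
    exact total.deriv
  rw [e1]
  rw [← pt_px_comm hu x t]
  rw [hdP x t]
  have h1 := hHne x t
  have h2 := ne_of_gt (hrpos x t)
  field_simp
  ring
end
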